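/- arXiv:2601.02276 — 3 statements merged into one kernel-verified Lean document; each statement's English description precedes it below -/
import Mathlib

section
/- Suppose the density hypothesis holds. Then for every n = 0,…,m−1 and every t ≥ 0, ℙ(T_{n+1} > t | 𝓕_t) = ∫_{E^n} ∫_{Δ_n} η̂^n_t(θ_(n), l_(n)) dθ_(n) 𝛌(dl_(n)) ℙ-almost surely; in particular, for n = 0 this reads ℙ(T_1 > t | 𝓕_t) = η̂^0_t ℙ-almost surely. -/
open MeasureTheory ProbabilityTheory

noncomputable section

/-- `Δ_n`: strictly ordered times starting at `0` (constraints on the first `n+1`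
coordinates of the tuple). -/
def DeltaSet (n : ℕ) (θ : ℕ → ℝ) : Prop :=
  θ 0 = 0 ∧ ∀ i, i < n → θ i < θ (i + 1)

variable {Ω : Type*} [mΩ : MeasurableSpace Ω] {E : Type*} [MeasurableSpace E]

/-- Iterated "survival" integral: `survAux η Kk k p a t θ l ω` integrates `η_t` in the
next `k` time–mark pairs, the time `θ_{p+1}` over `(a, ∞)`, each subsequent time over
`(previous time, ∞)`, and the marks with the kernels. -/
def survAux (η : ℝ → (ℕ → ℝ) → (ℕ → E) → Ω → ℝ) (Kk : ℕ → Kernel (ℕ → E) E) :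
    ℕ → ℕ → ℝ → ℝ → (ℕ → ℝ) → (ℕ → E) → Ω → ℝ
  | 0, _, _, t, θ, l, ω => η t θ l ω
  | k + 1, p, a, t, θ, l, ω =>
      ∫ e, (∫ u in Set.Ioi a,
          survAux η Kk k (p + 1) u t (Function.update θ (p + 1) u)
            (Function.update l p e) ω) ∂(Kk p l)

/-- The conditional survival densities `η̂ⁿ` (`η̂^m = η`). -/
def hatEta (m : ℕ) (η : ℝ → (ℕ → ℝ) → (ℕ → E) → Ω → ℝ) (Kk : ℕ → Kernel (ℕ → E) E)
    (n : ℕ) (t : ℝ) (θ : ℕ → ℝ) (l : ℕ → E) (ω : Ω) : ℝ :=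
  survAux η Kk (m - n) n t t θ l ω

/-- Lebesgue measure on the simplex `Δ_n` (coordinates beyond `n` fixed to `0`). -/
def timeMeas : ℕ → Measure (ℕ → ℝ)
  | 0 => Measure.dirac fun _ => 0
  | n + 1 =>
      (timeMeas n).bind fun θ =>
        (volume.restrict (Set.Ioi (θ n))).map fun u => Function.update θ (n + 1) u

/-- The mark measure `𝛌 = λ₁(dl₁) ∏ λ_{i+1}(l_{(i)}, dl_{i+1})` on mark tuples. -/
def markMeas (Kk : ℕ → Kernel (ℕ → E) E) [Inhabited E] : ℕ → Measure (ℕ → E)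
  | 0 => Measure.dirac fun _ => (default : E)
  | n + 1 => (markMeas Kk n).bind fun l => (Kk n l).map fun e => Function.update l n e

/-- The measure `dθ_{(n)} ⊗ 𝛌(dl_{(n)})` on `Δ_n × Eⁿ`. -/
def idxMeas (Kk : ℕ → Kernel (ℕ → E) E) [Inhabited E] (n : ℕ) :
    Measure ((ℕ → ℝ) × (ℕ → E)) :=
  (timeMeas n).bind fun θ => (markMeas Kk n).map fun l => (θ, l)

/-- **Density hypothesis**: for every `t ≥ 0` and bounded measurable `g`,
`𝔼[g(T_{(m)}, L_{(m)}) | 𝓕_t] = ∫ g(θ,l) η_t(θ,l) dθ_{(m)} 𝛌(dl_{(m)})` a.s. -/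
def DensityHyp (μ : Measure Ω) (ℱ : Filtration ℝ mΩ) (m : ℕ)
    (η : ℝ → (ℕ → ℝ) → (ℕ → E) → Ω → ℝ) (Kk : ℕ → Kernel (ℕ → E) E) [Inhabited E]
    (T : ℕ → Ω → ℝ) (L : ℕ → Ω → E) : Prop :=
  ∀ t, 0 ≤ t → ∀ g : (ℕ → ℝ) → (ℕ → E) → ℝ,
    Measurable (Function.uncurry g) → (∃ C, ∀ θ l, |g θ l| ≤ C) →
    (μ[fun ω => g (fun i => T i ω) fun i => L i ω | ℱ t]) =ᵐ[μ]
      fun ω => ∫ p, g p.1 p.2 * η t p.1 p.2 ω ∂(idxMeas Kk m)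

/-! ### Auxiliary development -/

section Aux

open Set Function
open scoped ENNReal

@[fun_prop, measurability]
lemma measurable_updatePair {α : Type*} [MeasurableSpace α] (i : ℕ) :
    Measurable fun q : (ℕ → α) × α => Function.update q.1 i q.2 := by
  refine measurable_pi_lambda _ fun j => ?_
  simp only [Function.update_apply]
  by_cases h : j = i
  · simpa [h] using measurable_snd
  · simp only [h, ↓reduceIte]; exact (measurable_pi_apply j).comp measurable_fst

/-- The time kernel: `θ ↦ Lebesgue measure on (θ n, ∞)`. -/
def timeKernel (n : ℕ) : Kernel (ℕ → ℝ) ℝ :=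
  Kernel.withDensity (Kernel.const _ (volume : Measure ℝ))
    fun θ u => (Set.Ioi (θ n)).indicator (fun _ => (1 : ℝ≥0∞)) u

lemma measurable_timeKernel_density (n : ℕ) :
    Measurable (Function.uncurry fun (θ : ℕ → ℝ) (u : ℝ) =>
      (Set.Ioi (θ n)).indicator (fun _ => (1 : ℝ≥0∞)) u) := by
  have h : (Function.uncurry fun (θ : ℕ → ℝ) (u : ℝ) =>
      (Set.Ioi (θ n)).indicator (fun _ => (1 : ℝ≥0∞)) u)
      = fun q : (ℕ → ℝ) × ℝ => if q.1 n < q.2 then (1 : ℝ≥0∞) else 0 := by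
    funext q; simp [Function.uncurry, Set.indicator_apply]
  rw [h]
  exact Measurable.ite
    (measurableSet_lt (measurable_fst.eval) measurable_snd)
    measurable_const measurable_const

instance timeKernel_sfinite (n : ℕ) : IsSFiniteKernel (timeKernel n) := by
  unfold timeKernel
  refine Kernel.IsSFiniteKernel.withDensity _ fun θ u => ?_
  by_cases h : u ∈ Set.Ioi (θ n) <;> simp [Set.indicator_apply, h]

lemma timeKernel_apply (n : ℕ) (θ : ℕ → ℝ) :
    timeKernel n θ = volume.restrict (Set.Ioi (θ n)) := by
  rw [timeKernel, Kernel.withDensity_apply _ (measurable_timeKernel_density n),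
    Kernel.const_apply, withDensity_indicator measurableSet_Ioi]
  simp [MeasureTheory.withDensity_one]

lemma measurable_map_kernel {α β γ : Type*} [MeasurableSpace α] [MeasurableSpace β]
    [MeasurableSpace γ] (κ : Kernel α β) [IsSFiniteKernel κ] {g : α → β → γ}
    (hg : Measurable fun p : α × β => g p.1 p.2) :
    Measurable fun a => (κ a).map (g a) := by
  apply Measure.measurable_of_measurable_coe
  intro s hs
  have h : (fun a => ((κ a).map (g a)) s)
      = fun a => κ a (Prod.mk a ⁻¹' ((fun p : α × β => g p.1 p.2) ⁻¹' s)) := by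
    funext a
    rw [Measure.map_apply (show Measurable (g a) from hg.comp measurable_prodMk_left) hs]
    rfl
  rw [h]
  exact Kernel.measurable_kernel_prodMk_left (hg hs)

lemma bind_map_eq {α β γ : Type*} [MeasurableSpace α] [MeasurableSpace β] [MeasurableSpace γ]
    (μ : Measure α) [SFinite μ] (κ : Kernel α β) [IsSFiniteKernel κ] {g : α → β → γ}
    (hg : Measurable fun p : α × β => g p.1 p.2) :
    μ.bind (fun a => (κ a).map (g a)) = (μ ⊗ₘ κ).map fun p => g p.1 p.2 := by
  ext s hs
  rw [Measure.bind_apply hs (measurable_map_kernel κ hg).aemeasurable,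
    Measure.map_apply hg hs, Measure.compProd_apply (hg hs)]
  refine lintegral_congr fun a => ?_
  rw [Measure.map_apply (show Measurable (g a) from hg.comp measurable_prodMk_left) hs]
  rfl

section Kernels

variable {Kk : ℕ → Kernel (ℕ → E) E} [Inhabited E]

lemma sfinite_timeMeas : ∀ n, SFinite (timeMeas n) := by
  intro n
  induction n with
  | zero => rw [timeMeas]; infer_instance
  | succ n IH =>
    rw [timeMeas, show (fun θ : ℕ → ℝ =>
        (volume.restrict (Set.Ioi (θ n))).map fun u => Function.update θ (n+1) u)
        = fun θ => (timeKernel n θ).map fun u => Function.update θ (n+1) u from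
        funext fun θ => by rw [timeKernel_apply],
      bind_map_eq _ _ (measurable_updatePair (n+1))]
    infer_instance

lemma timeMeas_succ (n : ℕ) :
    timeMeas (n + 1)
      = ((timeMeas n) ⊗ₘ timeKernel n).map fun p => Function.update p.1 (n + 1) p.2 := by
  haveI := sfinite_timeMeas n
  rw [timeMeas, show (fun θ : ℕ → ℝ =>
      (volume.restrict (Set.Ioi (θ n))).map fun u => Function.update θ (n+1) u)
      = fun θ => (timeKernel n θ).map fun u => Function.update θ (n+1) u from
      funext fun θ => by rw [timeKernel_apply]]
  exact bind_map_eq _ _ (measurable_updatePair (n+1))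

variable (hsf : ∀ p, IsSFiniteKernel (Kk p))
include hsf

lemma sfinite_markMeas : ∀ n, SFinite (markMeas Kk n) := by
  intro n
  induction n with
  | zero => rw [markMeas]; infer_instance
  | succ n IH =>
    haveI := hsf n
    rw [markMeas, bind_map_eq _ _ (measurable_updatePair n)]
    infer_instance

lemma markMeas_succ (n : ℕ) :
    markMeas Kk (n + 1)
      = ((markMeas Kk n) ⊗ₘ Kk n).map fun p => Function.update p.1 n p.2 := by
  haveI := sfinite_markMeas hsf n
  haveI := hsf n
  rw [markMeas]
  exact bind_map_eq _ _ (measurable_updatePair n)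

lemma idxMeas_prod (n : ℕ) : idxMeas Kk n = (timeMeas n).prod (markMeas Kk n) := by
  haveI := sfinite_timeMeas n
  haveI := sfinite_markMeas hsf n
  rw [idxMeas, show (fun θ : ℕ → ℝ => (markMeas Kk n).map fun l => (θ, l))
      = fun θ => ((Kernel.const (ℕ → ℝ) (markMeas Kk n)) θ).map fun l => (θ, l) from rfl,
    bind_map_eq _ _ (measurable_fst.prodMk measurable_snd)]
  rw [show (fun p : (ℕ → ℝ) × (ℕ → E) => (p.1, p.2)) = id from rfl, Measure.map_id,
    Measure.compProd_const]

lemma lintegral_timeMeas_succ (n : ℕ) {f : (ℕ → ℝ) → ℝ≥0∞} (hf : Measurable f) :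
    ∫⁻ θ, f θ ∂timeMeas (n + 1)
      = ∫⁻ θ, (∫⁻ u in Set.Ioi (θ n), f (Function.update θ (n + 1) u)) ∂timeMeas n := by
  haveI := sfinite_timeMeas n
  rw [timeMeas_succ n, lintegral_map hf (measurable_updatePair (n+1)),
    Measure.lintegral_compProd (show Measurable fun q : (ℕ → ℝ) × ℝ =>
      f (Function.update q.1 (n+1) q.2) from hf.comp (measurable_updatePair (n+1)))]
  exact lintegral_congr fun θ => by rw [timeKernel_apply]

lemma lintegral_markMeas_succ (n : ℕ) {f : (ℕ → E) → ℝ≥0∞} (hf : Measurable f) :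
    ∫⁻ l, f l ∂markMeas Kk (n + 1)
      = ∫⁻ l, (∫⁻ e, f (Function.update l n e) ∂Kk n l) ∂markMeas Kk n := by
  haveI := sfinite_markMeas hsf n
  haveI := hsf n
  rw [markMeas_succ hsf n, lintegral_map hf (measurable_updatePair n),
    Measure.lintegral_compProd (show Measurable fun q : (ℕ → E) × E =>
      f (Function.update q.1 n q.2) from hf.comp (measurable_updatePair n))]

lemma lintegral_idxMeas (n : ℕ) {F : (ℕ → ℝ) × (ℕ → E) → ℝ≥0∞} (hF : Measurable F) :
    ∫⁻ p, F p ∂idxMeas Kk n = ∫⁻ θ, (∫⁻ l, F (θ, l) ∂markMeas Kk n) ∂timeMeas n := by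
  haveI := sfinite_timeMeas n
  haveI := sfinite_markMeas hsf n
  rw [idxMeas_prod hsf n, lintegral_prod _ hF.aemeasurable]

end Kernels

lemma measurable_update_comp {α β : Type*} [MeasurableSpace α] [MeasurableSpace β] (i : ℕ)
    {g : β → ℕ → α} {h : β → α} (hg : Measurable g) (hh : Measurable h) :
    Measurable fun b => Function.update (g b) i (h b) :=
  (measurable_updatePair i).comp (hg.prodMk hh)

/-- The `ℝ≥0∞`-valued analogue of `survAux` for a fixed base function `f`. -/
def lAux (Kk : ℕ → Kernel (ℕ → E) E) (f : (ℕ → ℝ) → (ℕ → E) → ℝ≥0∞) :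
    ℕ → ℕ → ℝ → (ℕ → ℝ) → (ℕ → E) → ℝ≥0∞
  | 0, _, _, θ, l => f θ l
  | k + 1, p, a, θ, l =>
      ∫⁻ e, (∫⁻ u in Set.Ioi a,
          lAux Kk f k (p + 1) u (Function.update θ (p + 1) u)
            (Function.update l p e)) ∂(Kk p l)

section LAux

variable {Kk : ℕ → Kernel (ℕ → E) E} [Inhabited E]

lemma measurable_lAux (hsf : ∀ p, IsSFiniteKernel (Kk p))
    {f : (ℕ → ℝ) → (ℕ → E) → ℝ≥0∞}
    (hf : Measurable fun p : (ℕ → ℝ) × (ℕ → E) => f p.1 p.2) :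
    ∀ k p, Measurable fun x : ℝ × (ℕ → ℝ) × (ℕ → E) => lAux Kk f k p x.1 x.2.1 x.2.2 := by
  intro k
  induction k with
  | zero =>
    intro p
    simp only [lAux]
    exact hf.comp ((measurable_fst.comp measurable_snd).prodMk
      (measurable_snd.comp measurable_snd))
  | succ k IH =>
    intro p
    haveI := hsf p
    have hmain : Measurable fun q : ((ℝ × (ℕ → ℝ) × (ℕ → E)) × E) × ℝ =>
        lAux Kk f k (p + 1) q.2 (Function.update q.1.1.2.1 (p + 1) q.2)
          (Function.update q.1.1.2.2 p q.1.2) := by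
      refine (IH (p + 1)).comp (Measurable.prodMk measurable_snd (Measurable.prodMk ?_ ?_))
      · exact measurable_update_comp (p+1)
          ((measurable_fst.comp (measurable_snd.comp (measurable_fst.comp measurable_fst))))
          measurable_snd
      · exact measurable_update_comp p
          ((measurable_snd.comp (measurable_snd.comp (measurable_fst.comp measurable_fst))))
          (measurable_snd.comp measurable_fst)
    have hind : Measurable fun q : ((ℝ × (ℕ → ℝ) × (ℕ → E)) × E) × ℝ =>
        (Set.Ioi q.1.1.1).indicator
          (fun u => lAux Kk f k (p + 1) u (Function.update q.1.1.2.1 (p + 1) u)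
            (Function.update q.1.1.2.2 p q.1.2)) q.2 := by
      have h : (fun q : ((ℝ × (ℕ → ℝ) × (ℕ → E)) × E) × ℝ =>
          (Set.Ioi q.1.1.1).indicator
            (fun u => lAux Kk f k (p + 1) u (Function.update q.1.1.2.1 (p + 1) u)
              (Function.update q.1.1.2.2 p q.1.2)) q.2)
          = fun q => if q.1.1.1 < q.2 then
              lAux Kk f k (p + 1) q.2 (Function.update q.1.1.2.1 (p + 1) q.2)
                (Function.update q.1.1.2.2 p q.1.2)
            else 0 := by
        funext q; simp [Set.indicator_apply]
      rw [h]
      exact Measurable.ite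
        (measurableSet_lt (measurable_fst.comp (measurable_fst.comp measurable_fst))
          measurable_snd) hmain measurable_const
    have hG : Measurable fun y : (ℝ × (ℕ → ℝ) × (ℕ → E)) × E =>
        ∫⁻ u, (Set.Ioi y.1.1).indicator
          (fun u => lAux Kk f k (p + 1) u (Function.update y.1.2.1 (p + 1) u)
            (Function.update y.1.2.2 p y.2)) u := Measurable.lintegral_prod_right' hind
    have hproj : Measurable fun x : ℝ × (ℕ → ℝ) × (ℕ → E) => x.2.2 :=
      measurable_snd.comp measurable_snd
    set κ' : Kernel (ℝ × (ℕ → ℝ) × (ℕ → E)) E :=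
      (Kk p).comap (fun x : ℝ × (ℕ → ℝ) × (ℕ → E) => x.2.2) hproj with hκ'
    have heq : (fun x : ℝ × (ℕ → ℝ) × (ℕ → E) => lAux Kk f (k + 1) p x.1 x.2.1 x.2.2)
        = fun x => ∫⁻ e, (∫⁻ u, (Set.Ioi x.1).indicator
            (fun u => lAux Kk f k (p + 1) u (Function.update x.2.1 (p + 1) u)
              (Function.update x.2.2 p e)) u)
          ∂(κ' x) := by
      funext x
      rw [hκ', Kernel.comap_apply]
      simp only [lAux]
      exact lintegral_congr fun e => (lintegral_indicator measurableSet_Ioi _).symm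
    rw [heq]
    exact Measurable.lintegral_kernel_prod_right hG

lemma lAux_const_mul {f : (ℕ → ℝ) → (ℕ → E) → ℝ≥0∞}
    {c : (ℕ → ℝ) → ℝ≥0∞} (hct : ∀ θ, c θ ≠ ⊤) :
    ∀ (k p : ℕ) (a : ℝ) (θ : ℕ → ℝ) (l : ℕ → E),
      (∀ θ₁ θ₂ : ℕ → ℝ, (∀ i, i ≤ p → θ₁ i = θ₂ i) → c θ₁ = c θ₂) →
      lAux Kk (fun θ' l' => c θ' * f θ' l') k p a θ l = c θ * lAux Kk f k p a θ l := by
  intro k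
  induction k with
  | zero => intro p a θ l _; simp [lAux]
  | succ k IH =>
    intro p a θ l hc
    simp only [lAux]
    have hstep : ∀ (e : E) (u : ℝ),
        lAux Kk (fun θ' l' => c θ' * f θ' l') k (p + 1) u (Function.update θ (p + 1) u)
          (Function.update l p e)
        = c θ * lAux Kk f k (p + 1) u (Function.update θ (p + 1) u)
            (Function.update l p e) := by
      intro e u
      rw [IH (p + 1) u _ _ fun θ₁ θ₂ h => hc θ₁ θ₂ fun i hi => h i (le_trans hi (Nat.le_succ p))]
      congr 1
      exact hc _ _ fun i hi => Function.update_of_ne (by omega) _ _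
    simp only [hstep]
    rw [lintegral_congr fun e => lintegral_const_mul' _ _ (hct θ)]
    exact lintegral_const_mul' _ _ (hct θ)

lemma lAux_eq_zero {f : (ℕ → ℝ) → (ℕ → E) → ℝ≥0∞} :
    ∀ (k p : ℕ) (a : ℝ) (θ : ℕ → ℝ) (l : ℕ → E),
      (∀ (θ' : ℕ → ℝ) (l' : ℕ → E), (∀ i, i ≤ p → θ' i = θ i) → f θ' l' = 0) →
      lAux Kk f k p a θ l = 0 := by
  intro k
  induction k with
  | zero => intro p a θ l h; simpa [lAux] using h θ l fun _ _ => rfl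
  | succ k IH =>
    intro p a θ l h
    simp only [lAux]
    have hz : ∀ (e : E) (u : ℝ),
        lAux Kk f k (p + 1) u (Function.update θ (p + 1) u) (Function.update l p e) = 0 := by
      intro e u
      refine IH (p + 1) u _ _ fun θ' l' h' => h θ' l' fun i hi => ?_
      rw [h' i (le_trans hi (Nat.le_succ p)), Function.update_of_ne (by omega)]
    simp [hz]

lemma measurable_inner_block (hsf : ∀ p, IsSFiniteKernel (Kk p)) (q : ℕ)
    {F : (ℕ → ℝ) × (ℕ → E) → ℝ≥0∞} (hF : Measurable F) :
    Measurable fun p : (ℕ → ℝ) × (ℕ → E) =>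
      ∫⁻ e, (∫⁻ u in Set.Ioi (p.1 q),
        F (Function.update p.1 (q + 1) u, Function.update p.2 q e)) ∂Kk q p.2 := by
  haveI := hsf q
  set κ' : Kernel ((ℕ → ℝ) × (ℕ → E)) E :=
    (Kk q).comap (fun p : (ℕ → ℝ) × (ℕ → E) => p.2) measurable_snd with hκ'
  have hind : Measurable fun z : (((ℕ → ℝ) × (ℕ → E)) × E) × ℝ =>
      (Set.Ioi (z.1.1.1 q)).indicator
        (fun u => F (Function.update z.1.1.1 (q + 1) u,
          Function.update z.1.1.2 q z.1.2)) z.2 := by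
    have h : (fun z : (((ℕ → ℝ) × (ℕ → E)) × E) × ℝ =>
        (Set.Ioi (z.1.1.1 q)).indicator
          (fun u => F (Function.update z.1.1.1 (q + 1) u,
            Function.update z.1.1.2 q z.1.2)) z.2)
        = fun z => if z.1.1.1 q < z.2 then
            F (Function.update z.1.1.1 (q + 1) z.2, Function.update z.1.1.2 q z.1.2)
          else 0 := by
      funext z; simp [Set.indicator_apply]
    rw [h]
    refine Measurable.ite
      (measurableSet_lt (show Measurable fun z : (((ℕ → ℝ) × (ℕ → E)) × E) × ℝ => z.1.1.1 q from
        (measurable_fst.comp (measurable_fst.comp measurable_fst)).eval)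
        measurable_snd) (hF.comp (Measurable.prodMk ?_ ?_)) measurable_const
    · exact measurable_update_comp (q + 1)
        (measurable_fst.comp (measurable_fst.comp measurable_fst)) measurable_snd
    · exact measurable_update_comp q
        (measurable_snd.comp (measurable_fst.comp measurable_fst))
        (measurable_snd.comp measurable_fst)
  have hG : Measurable fun y : ((ℕ → ℝ) × (ℕ → E)) × E =>
      ∫⁻ u, (Set.Ioi (y.1.1 q)).indicator
        (fun u => F (Function.update y.1.1 (q + 1) u, Function.update y.1.2 q y.2)) u :=
    Measurable.lintegral_prod_right' hind
  have heq : (fun p : (ℕ → ℝ) × (ℕ → E) =>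
      ∫⁻ e, (∫⁻ u in Set.Ioi (p.1 q),
        F (Function.update p.1 (q + 1) u, Function.update p.2 q e)) ∂Kk q p.2)
      = fun p => ∫⁻ e, (∫⁻ u, (Set.Ioi (p.1 q)).indicator
          (fun u => F (Function.update p.1 (q + 1) u, Function.update p.2 q e)) u)
        ∂(κ' p) := by
    funext p
    rw [hκ', Kernel.comap_apply]
    exact lintegral_congr fun e => (lintegral_indicator measurableSet_Ioi _).symm
  rw [heq]
  exact Measurable.lintegral_kernel_prod_right hG

lemma lintegral_idxMeas_succ (hsf : ∀ p, IsSFiniteKernel (Kk p)) (q : ℕ)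
    {F : (ℕ → ℝ) × (ℕ → E) → ℝ≥0∞} (hF : Measurable F) :
    ∫⁻ p, F p ∂idxMeas Kk (q + 1)
      = ∫⁻ p, (∫⁻ e, (∫⁻ u in Set.Ioi (p.1 q),
          F (Function.update p.1 (q + 1) u, Function.update p.2 q e)) ∂Kk q p.2)
          ∂idxMeas Kk q := by
  haveI := hsf q
  haveI := sfinite_markMeas (Kk := Kk) hsf q
  haveI := sfinite_timeMeas q
  rw [lintegral_idxMeas hsf (q + 1) hF]
  have h1 : ∀ θ : ℕ → ℝ, (∫⁻ l, F (θ, l) ∂markMeas Kk (q + 1))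
      = ∫⁻ l, (∫⁻ e, F (θ, Function.update l q e) ∂Kk q l) ∂markMeas Kk q := fun θ =>
    lintegral_markMeas_succ hsf q (hF.comp (measurable_const.prodMk measurable_id))
  rw [lintegral_congr h1]
  have hH : Measurable fun x : (ℕ → ℝ) × (ℕ → E) =>
      ∫⁻ e, F (x.1, Function.update x.2 q e) ∂Kk q x.2 := by
    set κ' : Kernel ((ℕ → ℝ) × (ℕ → E)) E :=
      (Kk q).comap (fun p : (ℕ → ℝ) × (ℕ → E) => p.2) measurable_snd with hκ'
    have h2 : Measurable fun y : ((ℕ → ℝ) × (ℕ → E)) × E =>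
        F (y.1.1, Function.update y.1.2 q y.2) :=
      hF.comp ((measurable_fst.comp measurable_fst).prodMk
        (measurable_update_comp q (measurable_snd.comp measurable_fst) measurable_snd))
    have heq : (fun x : (ℕ → ℝ) × (ℕ → E) =>
        ∫⁻ e, F (x.1, Function.update x.2 q e) ∂Kk q x.2)
        = fun x => ∫⁻ e, F (x.1, Function.update x.2 q e) ∂(κ' x) := by
      funext x; rw [hκ', Kernel.comap_apply]
    rw [heq]
    exact Measurable.lintegral_kernel_prod_right h2
  have hG : Measurable fun θ : ℕ → ℝ =>
      ∫⁻ l, (∫⁻ e, F (θ, Function.update l q e) ∂Kk q l) ∂markMeas Kk q :=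
    Measurable.lintegral_prod_right' (ν := markMeas Kk q) hH
  rw [lintegral_timeMeas_succ hsf q hG, lintegral_idxMeas hsf q (measurable_inner_block hsf q hF)]
  refine lintegral_congr fun θ => ?_
  have hswap1 : (∫⁻ u in Set.Ioi (θ q), (∫⁻ l, (∫⁻ e,
        F (Function.update θ (q + 1) u, Function.update l q e) ∂Kk q l) ∂markMeas Kk q))
      = ∫⁻ l, (∫⁻ u in Set.Ioi (θ q), (∫⁻ e,
          F (Function.update θ (q + 1) u, Function.update l q e) ∂Kk q l)) ∂markMeas Kk q := by
    refine lintegral_lintegral_swap (Measurable.aemeasurable ?_)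
    set κ'' : Kernel (ℝ × (ℕ → E)) E :=
      (Kk q).comap (fun z : ℝ × (ℕ → E) => z.2) measurable_snd with hκ''
    have h2 : Measurable fun y : (ℝ × (ℕ → E)) × E =>
        F (Function.update θ (q + 1) y.1.1, Function.update y.1.2 q y.2) :=
      hF.comp ((measurable_update_comp (q + 1) measurable_const
          (measurable_fst.comp measurable_fst)).prodMk
        (measurable_update_comp q (measurable_snd.comp measurable_fst) measurable_snd))
    have heq : (Function.uncurry fun (u : ℝ) (l : ℕ → E) => ∫⁻ e,
        F (Function.update θ (q + 1) u, Function.update l q e) ∂Kk q l)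
        = fun z : ℝ × (ℕ → E) => ∫⁻ e,
            F (Function.update θ (q + 1) z.1, Function.update z.2 q e) ∂(κ'' z) := by
      funext z; rw [hκ'', Kernel.comap_apply]; rfl
    rw [heq]
    exact Measurable.lintegral_kernel_prod_right h2
  rw [hswap1]
  refine lintegral_congr fun l => ?_
  refine lintegral_lintegral_swap (Measurable.aemeasurable ?_)
  exact hF.comp ((measurable_update_comp (q + 1) measurable_const measurable_fst).prodMk
    (measurable_update_comp q measurable_const measurable_snd))

lemma lintegral_idxMeas_eq_lAux (hsf : ∀ p, IsSFiniteKernel (Kk p)) :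
    ∀ (k n : ℕ) (f : (ℕ → ℝ) → (ℕ → E) → ℝ≥0∞),
      (Measurable fun p : (ℕ → ℝ) × (ℕ → E) => f p.1 p.2) →
      ∫⁻ p, f p.1 p.2 ∂idxMeas Kk (n + k)
        = ∫⁻ p, lAux Kk f k n (p.1 n) p.1 p.2 ∂idxMeas Kk n := by
  intro k
  induction k with
  | zero => intro n f hf; simp [lAux]
  | succ k IH =>
    intro n f hf
    have hnk : n + (k + 1) = (n + 1) + k := by omega
    rw [hnk, IH (n + 1) f hf]
    have hFmeas : Measurable fun p : (ℕ → ℝ) × (ℕ → E) =>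
        lAux Kk f k (n + 1) (p.1 (n + 1)) p.1 p.2 := by
      have h := (measurable_lAux hsf hf k (n + 1)).comp
        (Measurable.prodMk
          (show Measurable fun p : (ℕ → ℝ) × (ℕ → E) => p.1 (n + 1) from measurable_fst.eval)
          (measurable_fst.prodMk measurable_snd))
      exact h
    rw [lintegral_idxMeas_succ hsf n hFmeas]
    refine lintegral_congr fun p => ?_
    simp only [lAux]
    refine lintegral_congr fun e => lintegral_congr fun u => ?_
    simp [Function.update_self]

lemma lAux_indicator_eq {f : (ℕ → ℝ) → (ℕ → E) → ℝ≥0∞} {m : ℕ}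
    (hzero : ∀ θ l, ¬ DeltaSet m θ → f θ l = 0)
    (t : ℝ) (k n : ℕ) (hn : n < m) (θ : ℕ → ℝ) (l : ℕ → E) :
    lAux Kk (fun θ' l' => (Set.Ioi t).indicator (fun _ => (1 : ℝ≥0∞)) (θ' (n + 1)) * f θ' l')
      (k + 1) n (θ n) θ l
    = lAux Kk f (k + 1) n t θ l := by
  simp only [lAux]
  refine lintegral_congr fun e => ?_
  have hpull : ∀ u : ℝ,
      lAux Kk (fun θ' l' => (Set.Ioi t).indicator (fun _ => (1 : ℝ≥0∞)) (θ' (n + 1)) * f θ' l')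
        k (n + 1) u (Function.update θ (n + 1) u) (Function.update l n e)
      = (Set.Ioi t).indicator (fun _ => (1 : ℝ≥0∞)) u
          * lAux Kk f k (n + 1) u (Function.update θ (n + 1) u) (Function.update l n e) := by
    intro u
    rw [lAux_const_mul (c := fun θ' => (Set.Ioi t).indicator (fun _ => (1 : ℝ≥0∞)) (θ' (n + 1)))
        (fun θ' => by by_cases h : θ' (n + 1) ∈ Set.Ioi t <;> simp [Set.indicator_apply, h])
        k (n + 1) u _ _ (fun θ₁ θ₂ h => by
          show (Set.Ioi t).indicator (fun _ => (1 : ℝ≥0∞)) (θ₁ (n + 1))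
            = (Set.Ioi t).indicator (fun _ => (1 : ℝ≥0∞)) (θ₂ (n + 1))
          rw [h (n + 1) (le_refl _)])]
    rw [Function.update_self]
  simp only [hpull]
  set B : ℝ → ℝ≥0∞ := fun u =>
    lAux Kk f k (n + 1) u (Function.update θ (n + 1) u) (Function.update l n e) with hB
  have hBzero : ∀ u, u ∉ Set.Ioi (θ n) → B u = 0 := by
    intro u hu
    refine lAux_eq_zero k (n + 1) u _ _ fun θ' l' h' => hzero θ' l' ?_
    rintro ⟨h0, hord⟩
    have h1 : θ' n = θ n := by
      rw [h' n (by omega), Function.update_of_ne (by omega)]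
    have h2 : θ' (n + 1) = u := by rw [h' (n + 1) (le_refl _), Function.update_self]
    have h3 := hord n hn
    rw [h1, h2] at h3
    simp only [Set.mem_Ioi, not_lt] at hu
    linarith
  have key : ∀ u, (Set.Ioi t).indicator (fun _ => (1 : ℝ≥0∞)) u * B u
      = (Set.Ioi t).indicator B u := by
    intro u; by_cases h : u ∈ Set.Ioi t <;> simp [Set.indicator_apply, h]
  simp only [hB] at key; simp only [key]
  have hBind : ∀ u, B u = (Set.Ioi (θ n)).indicator B u := by
    intro u
    by_cases h : u ∈ Set.Ioi (θ n)
    · simp [Set.indicator_of_mem h]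
    · simp [Set.indicator_of_notMem h, hBzero u h]
  calc ∫⁻ u in Set.Ioi (θ n), (Set.Ioi t).indicator B u
      = ∫⁻ u, (Set.Ioi (θ n)).indicator ((Set.Ioi t).indicator B) u :=
        (lintegral_indicator measurableSet_Ioi _).symm
    _ = ∫⁻ u, (Set.Ioi t).indicator ((Set.Ioi (θ n)).indicator B) u := by
        refine lintegral_congr fun u => ?_
        rw [Set.indicator_indicator, Set.indicator_indicator, Set.inter_comm]
    _ = ∫⁻ u in Set.Ioi t, (Set.Ioi (θ n)).indicator B u :=
        lintegral_indicator measurableSet_Ioi _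
    _ = ∫⁻ u in Set.Ioi t, B u := lintegral_congr fun u => (hBind u).symm

lemma idxMeas_zero : idxMeas Kk 0
    = Measure.dirac ((fun _ => (0 : ℝ)), (fun _ : ℕ => (default : E))) := by
  rw [idxMeas]
  have h1 : (fun θ : ℕ → ℝ => (markMeas Kk 0).map fun l => (θ, l))
      = fun θ => Measure.dirac (θ, fun _ : ℕ => (default : E)) := by
    funext θ
    rw [show markMeas Kk 0 = Measure.dirac (fun _ : ℕ => (default : E)) from by rw [markMeas],
      Measure.map_dirac' measurable_prodMk_left]
  have hmeasd : Measurable fun θ : ℕ → ℝ => Measure.dirac (θ, fun _ : ℕ => (default : E)) :=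
    Measure.measurable_dirac.comp (measurable_id.prodMk measurable_const)
  rw [h1, show timeMeas 0 = Measure.dirac (fun _ : ℕ => (0 : ℝ)) from by rw [timeMeas],
    Measure.dirac_bind hmeasd]

end LAux

section SurvAux

variable {Kk : ℕ → Kernel (ℕ → E) E} [Inhabited E]

lemma survAux_eq_toReal (hsf : ∀ p, IsSFiniteKernel (Kk p))
    {η : ℝ → (ℕ → ℝ) → (ℕ → E) → Ω → ℝ} (t : ℝ) (ω : Ω)
    (hpos : ∀ θ l, 0 ≤ η t θ l ω)
    (hmeas : Measurable fun p : (ℕ → ℝ) × (ℕ → E) => ENNReal.ofReal (η t p.1 p.2 ω)) :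
    ∀ (k p : ℕ) (a : ℝ) (θ : ℕ → ℝ) (l : ℕ → E),
      lAux Kk (fun θ' l' => ENNReal.ofReal (η t θ' l' ω)) k p a θ l ≠ ⊤ →
      survAux η Kk k p a t θ l ω
        = (lAux Kk (fun θ' l' => ENNReal.ofReal (η t θ' l' ω)) k p a θ l).toReal := by
  intro k
  induction k with
  | zero =>
    intro p a θ l _
    simp [survAux, lAux, ENNReal.toReal_ofReal (hpos θ l)]
  | succ k IH =>
    intro p a θ l htop
    simp only [survAux, lAux] at htop ⊢
    have hLmeas : Measurable fun e : E => ∫⁻ u in Set.Ioi a,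
        lAux Kk (fun θ' l' => ENNReal.ofReal (η t θ' l' ω)) k (p + 1) u
          (Function.update θ (p + 1) u) (Function.update l p e) := by
      have hin : Measurable fun z : E × ℝ =>
          (Set.Ioi a).indicator (fun u =>
            lAux Kk (fun θ' l' => ENNReal.ofReal (η t θ' l' ω)) k (p + 1) u
              (Function.update θ (p + 1) u) (Function.update l p z.1)) z.2 := by
        have h : (fun z : E × ℝ =>
            (Set.Ioi a).indicator (fun u =>
              lAux Kk (fun θ' l' => ENNReal.ofReal (η t θ' l' ω)) k (p + 1) u
                (Function.update θ (p + 1) u) (Function.update l p z.1)) z.2)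
            = fun z => if a < z.2 then
                lAux Kk (fun θ' l' => ENNReal.ofReal (η t θ' l' ω)) k (p + 1) z.2
                  (Function.update θ (p + 1) z.2) (Function.update l p z.1)
              else 0 := by
          funext z; simp [Set.indicator_apply]
        rw [h]
        exact Measurable.ite (measurableSet_lt measurable_const measurable_snd)
          ((measurable_lAux hsf hmeas k (p + 1)).comp (measurable_snd.prodMk
            ((measurable_update_comp (p + 1) measurable_const measurable_snd).prodMk
              (measurable_update_comp p measurable_const measurable_fst))))
          measurable_const
      have h2 := Measurable.lintegral_prod_right' (ν := (volume : Measure ℝ)) hin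
      have heq : (fun e : E => ∫⁻ u in Set.Ioi a,
          lAux Kk (fun θ' l' => ENNReal.ofReal (η t θ' l' ω)) k (p + 1) u
            (Function.update θ (p + 1) u) (Function.update l p e))
          = fun e => ∫⁻ u, (Set.Ioi a).indicator (fun u =>
              lAux Kk (fun θ' l' => ENNReal.ofReal (η t θ' l' ω)) k (p + 1) u
                (Function.update θ (p + 1) u) (Function.update l p e)) u :=
        funext fun e => (lintegral_indicator measurableSet_Ioi _).symm
      rw [heq]
      exact h2
    haveI := hsf p
    have hae : ∀ᵐ e ∂Kk p l, (∫⁻ u in Set.Ioi a,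
        lAux Kk (fun θ' l' => ENNReal.ofReal (η t θ' l' ω)) k (p + 1) u
          (Function.update θ (p + 1) u) (Function.update l p e)) < ⊤ :=
      ae_lt_top hLmeas htop
    have hinner : ∀ᵐ e ∂Kk p l,
        (∫ u in Set.Ioi a, survAux η Kk k (p + 1) u t (Function.update θ (p + 1) u)
          (Function.update l p e) ω)
        = (∫⁻ u in Set.Ioi a,
            lAux Kk (fun θ' l' => ENNReal.ofReal (η t θ' l' ω)) k (p + 1) u
              (Function.update θ (p + 1) u) (Function.update l p e)).toReal := by
      filter_upwards [hae] with e he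
      have hmeasu : Measurable fun u : ℝ =>
          lAux Kk (fun θ' l' => ENNReal.ofReal (η t θ' l' ω)) k (p + 1) u
            (Function.update θ (p + 1) u) (Function.update l p e) :=
        (measurable_lAux hsf hmeas k (p + 1)).comp (measurable_id.prodMk
          ((measurable_update_comp (p + 1) measurable_const measurable_id).prodMk
            measurable_const))
      have haeu : ∀ᵐ u ∂(volume.restrict (Set.Ioi a)),
          lAux Kk (fun θ' l' => ENNReal.ofReal (η t θ' l' ω)) k (p + 1) u
            (Function.update θ (p + 1) u) (Function.update l p e) < ⊤ :=
        ae_lt_top hmeasu he.ne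
      calc (∫ u in Set.Ioi a, survAux η Kk k (p + 1) u t (Function.update θ (p + 1) u)
            (Function.update l p e) ω)
          = ∫ u in Set.Ioi a, (lAux Kk (fun θ' l' => ENNReal.ofReal (η t θ' l' ω)) k (p + 1) u
              (Function.update θ (p + 1) u) (Function.update l p e)).toReal :=
            integral_congr_ae (haeu.mono fun u hu => IH (p + 1) u _ _ hu.ne)
        _ = (∫⁻ u in Set.Ioi a,
              lAux Kk (fun θ' l' => ENNReal.ofReal (η t θ' l' ω)) k (p + 1) u
                (Function.update θ (p + 1) u) (Function.update l p e)).toReal :=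
            integral_toReal hmeasu.aemeasurable haeu
    calc (∫ e, (∫ u in Set.Ioi a, survAux η Kk k (p + 1) u t (Function.update θ (p + 1) u)
          (Function.update l p e) ω) ∂Kk p l)
        = ∫ e, (∫⁻ u in Set.Ioi a,
            lAux Kk (fun θ' l' => ENNReal.ofReal (η t θ' l' ω)) k (p + 1) u
              (Function.update θ (p + 1) u) (Function.update l p e)).toReal ∂Kk p l :=
          integral_congr_ae hinner
      _ = (∫⁻ e, (∫⁻ u in Set.Ioi a,
            lAux Kk (fun θ' l' => ENNReal.ofReal (η t θ' l' ω)) k (p + 1) u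
              (Function.update θ (p + 1) u) (Function.update l p e)) ∂Kk p l).toReal :=
          integral_toReal hLmeas.aemeasurable hae

end SurvAux

end Aux

open scoped ENNReal

/-- **Conditional survival probabilities from the density hypothesis**: under the
density hypothesis, for every `n = 0, …, m-1` and `t ≥ 0`, a.s.
`ℙ(T_{n+1} > t | 𝓕_t) = ∫_{Eⁿ} ∫_{Δ_n} η̂ⁿ_t(θ_{(n)}, l_{(n)}) dθ_{(n)} 𝛌(dl_{(n)})`;
in particular, for `n = 0`, `ℙ(T₁ > t | 𝓕_t) = η̂⁰_t(0)` a.s. -/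
theorem survival_probability_eq_integral_hatEta
    (μ : Measure Ω) [IsProbabilityMeasure μ] (ℱ : Filtration ℝ mΩ)
    (m : ℕ) (hm : 1 ≤ m) [Inhabited E]
    (η : ℝ → (ℕ → ℝ) → (ℕ → E) → Ω → ℝ) (Kk : ℕ → Kernel (ℕ → E) E)
    (T : ℕ → Ω → ℝ) (L : ℕ → Ω → E)
    -- λ₁ is a σ-finite measure on `E` (a constant kernel), the λ_{n+1} are probability
    -- kernels depending only on the first `n` marks
    (hK0const : ∀ l l' : ℕ → E, Kk 0 l = Kk 0 l')
    (hK0sf : ∀ l, SigmaFinite (Kk 0 l))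
    (hKprob : ∀ k, 1 ≤ k → ∀ l, IsProbabilityMeasure (Kk k l))
    (hKdep : ∀ k, ∀ l l' : ℕ → E, (∀ i, i < k → l i = l' i) → Kk k l = Kk k l')
    -- η is nonnegative, vanishes off Δ_m, depends only on `(θ_{(m)}, l_{(m)})`,
    -- is jointly measurable and progressively measurable in `(t, ω)`
    (hηpos : ∀ t θ l ω, 0 ≤ η t θ l ω)
    (hηzero : ∀ t θ l ω, ¬ DeltaSet m θ → η t θ l ω = 0)
    (hηdep : ∀ t (θ θ' : ℕ → ℝ) (l l' : ℕ → E) ω, (∀ i, i ≤ m → θ i = θ' i) →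
      (∀ i, i < m → l i = l' i) → η t θ l ω = η t θ' l' ω)
    (hηjm : Measurable fun p : ℝ × (ℕ → ℝ) × (ℕ → E) × Ω => η p.1 p.2.1 p.2.2.1 p.2.2.2)
    (hηpm : ∀ θ l, ProgMeasurable ℱ fun t ω => η t θ l ω)
    -- the random default times `0 = T₀ < T₁ < ⋯ < T_m < ∞` a.s. and marks are measurable
    (hT0 : ∀ ω, T 0 ω = 0)
    (hTmeas : ∀ n, Measurable (T n)) (hLmeas : ∀ n, Measurable (L n))
    (hTord : ∀ᵐ ω ∂μ, ∀ i, i < m → T i ω < T (i + 1) ω)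
    -- the density hypothesis
    (hdens : DensityHyp μ ℱ m η Kk T L) :
    (∀ n, n < m → ∀ t, 0 ≤ t →
      (μ[Set.indicator {ω | t < T (n + 1) ω} (fun _ => (1 : ℝ)) | ℱ t]) =ᵐ[μ]
        fun ω => ∫ p, hatEta m η Kk n t p.1 p.2 ω ∂(idxMeas Kk n)) ∧
    (∀ t, 0 ≤ t →
      (μ[Set.indicator {ω | t < T 1 ω} (fun _ => (1 : ℝ)) | ℱ t]) =ᵐ[μ]
        fun ω => hatEta m η Kk 0 t (fun _ => 0) (fun _ => default) ω) := by
  classical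
  have hsf : ∀ p, IsSFiniteKernel (Kk p) := by
    intro p
    match p with
    | 0 =>
      have h0 : Kk 0 = Kernel.const _ (Kk 0 fun _ => default) :=
        Kernel.ext fun l => hK0const l _
      rw [h0]
      haveI := hK0sf fun _ : ℕ => (default : E)
      infer_instance
    | p + 1 =>
      haveI : IsMarkovKernel (Kk (p + 1)) := ⟨fun l => hKprob (p + 1) (by omega) l⟩
      infer_instance
  have hηslice : ∀ (t : ℝ) (ω : Ω),
      Measurable fun p : (ℕ → ℝ) × (ℕ → E) => ENNReal.ofReal (η t p.1 p.2 ω) := by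
    intro t ω
    have h := ENNReal.measurable_ofReal.comp (hηjm.comp
      (show Measurable fun p : (ℕ → ℝ) × (ℕ → E) =>
        ((t, p.1, p.2, ω) : ℝ × (ℕ → ℝ) × (ℕ → E) × Ω) from
        measurable_const.prodMk (measurable_fst.prodMk
          (measurable_snd.prodMk measurable_const))))
    exact h
  have key : ∀ n, n < m → ∀ t, 0 ≤ t →
      ((μ[Set.indicator {ω | t < T (n + 1) ω} (fun _ => (1 : ℝ)) | ℱ t]) =ᵐ[μ]
        fun ω => (∫⁻ p, lAux Kk (fun θ' l' => ENNReal.ofReal (η t θ' l' ω)) (m - n) n t p.1 p.2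
          ∂idxMeas Kk n).toReal)
      ∧ ∀ᵐ ω ∂μ, (∫⁻ p, lAux Kk (fun θ' l' => ENNReal.ofReal (η t θ' l' ω)) (m - n) n t p.1 p.2
          ∂idxMeas Kk n) ≠ ⊤ := by
    intro n hn t ht
    set gR : (ℕ → ℝ) → (ℕ → E) → ℝ := fun θ _ => if t < θ (n + 1) then 1 else 0 with hgR
    have hgmeas : Measurable (Function.uncurry gR) := by
      have h : Measurable fun q : (ℕ → ℝ) × (ℕ → E) => if t < q.1 (n + 1) then (1 : ℝ) else 0 :=
        Measurable.ite (measurableSet_lt measurable_const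
          (show Measurable fun q : (ℕ → ℝ) × (ℕ → E) => q.1 (n + 1) from measurable_fst.eval))
          measurable_const measurable_const
      exact h
    have hgbd : ∃ C, ∀ θ l, |gR θ l| ≤ C :=
      ⟨1, fun θ l => by by_cases h : t < θ (n + 1) <;> simp [hgR, h]⟩
    have h1 := hdens t ht gR hgmeas hgbd
    have hLHS : (fun ω => gR (fun i => T i ω) fun i => L i ω)
        = Set.indicator {ω | t < T (n + 1) ω} (fun _ => (1 : ℝ)) := by
      funext ω
      by_cases h : t < T (n + 1) ω <;> simp [hgR, Set.indicator_apply, h]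
    rw [hLHS] at h1
    have hone := hdens t ht (fun _ _ => (1 : ℝ)) measurable_const ⟨1, fun _ _ => by norm_num⟩
    have hcc : (μ[fun _ => (1 : ℝ) | ℱ t]) = fun _ => (1 : ℝ) := condExp_const (ℱ.le t) 1
    rw [show (fun ω => (fun (_ : ℕ → ℝ) (_ : ℕ → E) => (1 : ℝ)) (fun i => T i ω)
        fun i => L i ω) = fun _ => (1 : ℝ) from rfl, hcc] at hone
    have haeη : ∀ᵐ ω ∂μ, ∫ p, η t p.1 p.2 ω ∂idxMeas Kk m = 1 := by
      filter_upwards [hone] with ω hω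
      simpa using hω.symm
    have hcomp : ∀ ω, (∫ p, η t p.1 p.2 ω ∂idxMeas Kk m) = 1 →
        ((∫ p, gR p.1 p.2 * η t p.1 p.2 ω ∂idxMeas Kk m
          = (∫⁻ p, lAux Kk (fun θ' l' => ENNReal.ofReal (η t θ' l' ω)) (m - n) n t p.1 p.2
              ∂idxMeas Kk n).toReal)
         ∧ (∫⁻ p, lAux Kk (fun θ' l' => ENNReal.ofReal (η t θ' l' ω)) (m - n) n t p.1 p.2
              ∂idxMeas Kk n) ≠ ⊤) := by
      intro ω hω
      have hηm : Measurable fun p : (ℕ → ℝ) × (ℕ → E) => η t p.1 p.2 ω := by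
        have h := hηjm.comp (show Measurable fun p : (ℕ → ℝ) × (ℕ → E) =>
          ((t, p.1, p.2, ω) : ℝ × (ℕ → ℝ) × (ℕ → E) × Ω) from
          measurable_const.prodMk (measurable_fst.prodMk
            (measurable_snd.prodMk measurable_const)))
        exact h
      have hInt : Integrable (fun p : (ℕ → ℝ) × (ℕ → E) => η t p.1 p.2 ω) (idxMeas Kk m) := by
        by_contra hc
        rw [integral_undef hc] at hω
        norm_num at hω
      have hfin : (∫⁻ p, ENNReal.ofReal (η t p.1 p.2 ω) ∂idxMeas Kk m) ≠ ⊤ := by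
        rw [← ofReal_integral_eq_lintegral_ofReal hInt
          (Filter.Eventually.of_forall fun p => hηpos t p.1 p.2 ω)]
        exact ENNReal.ofReal_ne_top
      set fC : (ℕ → ℝ) → (ℕ → E) → ℝ≥0∞ := fun θ' l' =>
        (Set.Ioi t).indicator (fun _ => (1 : ℝ≥0∞)) (θ' (n + 1)) * ENNReal.ofReal (η t θ' l' ω)
        with hfC
      have hfCm : Measurable fun p : (ℕ → ℝ) × (ℕ → E) => fC p.1 p.2 := by
        have hc : Measurable fun p : (ℕ → ℝ) × (ℕ → E) =>
            (Set.Ioi t).indicator (fun _ => (1 : ℝ≥0∞)) (p.1 (n + 1)) := by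
          have hind0 : Measurable ((Set.Ioi t).indicator fun _ : ℝ => (1 : ℝ≥0∞)) :=
            Measurable.indicator measurable_const measurableSet_Ioi
          have h := hind0.comp
            (show Measurable fun p : (ℕ → ℝ) × (ℕ → E) => p.1 (n + 1) from measurable_fst.eval)
          exact h
        exact hc.mul (hηslice t ω)
      have hofReal : ∀ p : (ℕ → ℝ) × (ℕ → E),
          ENNReal.ofReal (gR p.1 p.2 * η t p.1 p.2 ω) = fC p.1 p.2 := by
        intro p
        by_cases h : t < p.1 (n + 1) <;>
          simp [hgR, hfC, Set.indicator_apply, Set.mem_Ioi, h]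
      obtain ⟨k, hk⟩ : ∃ k, m - n = k + 1 := ⟨m - n - 1, by omega⟩
      have hchain : (∫⁻ p, lAux Kk (fun θ' l' => ENNReal.ofReal (η t θ' l' ω)) (m - n) n t
          p.1 p.2 ∂idxMeas Kk n) = ∫⁻ p, fC p.1 p.2 ∂idxMeas Kk m := by
        have hc1 := lintegral_idxMeas_eq_lAux hsf (m - n) n fC hfCm
        rw [show n + (m - n) = m from by omega] at hc1
        rw [hc1]
        refine lintegral_congr fun p => ?_
        rw [hk]
        exact (lAux_indicator_eq (f := fun θ' l' => ENNReal.ofReal (η t θ' l' ω))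
          (fun θ' l' hθ => by simp [hηzero t θ' l' ω hθ]) t k n hn p.1 p.2).symm
      have hle : (∫⁻ p, fC p.1 p.2 ∂idxMeas Kk m)
          ≤ ∫⁻ p, ENNReal.ofReal (η t p.1 p.2 ω) ∂idxMeas Kk m := by
        refine lintegral_mono fun p => ?_
        refine mul_le_of_le_one_left (zero_le) ?_
        by_cases h : p.1 (n + 1) ∈ Set.Ioi t <;> simp [hfC, Set.indicator_apply, h]
      have hfin2 : (∫⁻ p, fC p.1 p.2 ∂idxMeas Kk m) ≠ ⊤ := ne_top_of_le_ne_top hfin hle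
      constructor
      · have hnn : 0 ≤ᵐ[idxMeas Kk m]
            fun p : (ℕ → ℝ) × (ℕ → E) => gR p.1 p.2 * η t p.1 p.2 ω :=
          Filter.Eventually.of_forall fun p =>
            mul_nonneg (by by_cases h : t < p.1 (n + 1) <;> simp [hgR, h])
              (hηpos t p.1 p.2 ω)
        have hsm : AEStronglyMeasurable
            (fun p : (ℕ → ℝ) × (ℕ → E) => gR p.1 p.2 * η t p.1 p.2 ω) (idxMeas Kk m) :=
          ((show Measurable fun p : (ℕ → ℝ) × (ℕ → E) => gR p.1 p.2 from hgmeas).mul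
            hηm).aestronglyMeasurable
        rw [integral_eq_lintegral_of_nonneg_ae hnn hsm]
        rw [lintegral_congr hofReal, hchain]
      · rw [hchain]
        exact hfin2
    refine ⟨h1.trans ?_, ?_⟩
    · filter_upwards [haeη] with ω hω
      exact (hcomp ω hω).1
    · filter_upwards [haeη] with ω hω
      exact (hcomp ω hω).2
  constructor
  · intro n hn t ht
    refine ((key n hn t ht).1).trans ?_
    filter_upwards [(key n hn t ht).2] with ω hfin
    have hLm : Measurable fun p : (ℕ → ℝ) × (ℕ → E) =>
        lAux Kk (fun θ' l' => ENNReal.ofReal (η t θ' l' ω)) (m - n) n t p.1 p.2 := by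
      have h := (measurable_lAux (f := fun θ' l' => ENNReal.ofReal (η t θ' l' ω)) hsf (hηslice t ω) (m - n) n).comp
        (show Measurable fun p : (ℕ → ℝ) × (ℕ → E) =>
          ((t, p.1, p.2) : ℝ × (ℕ → ℝ) × (ℕ → E)) from
          measurable_const.prodMk (measurable_fst.prodMk measurable_snd))
      exact h
    have haep := ae_lt_top hLm hfin
    have hcongr : (∫ p, hatEta m η Kk n t p.1 p.2 ω ∂idxMeas Kk n)
        = ∫ p, (lAux Kk (fun θ' l' => ENNReal.ofReal (η t θ' l' ω)) (m - n) n t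
            p.1 p.2).toReal ∂idxMeas Kk n :=
      integral_congr_ae (haep.mono fun p hp =>
        survAux_eq_toReal hsf t ω (fun θ l => hηpos t θ l ω) (hηslice t ω)
          (m - n) n t p.1 p.2 hp.ne)
    rw [hcongr, integral_toReal hLm.aemeasurable haep]
  · intro t ht
    have hk0 := key 0 (by omega) t ht
    refine hk0.1.trans ?_
    filter_upwards [hk0.2] with ω hfin
    have hLm0 : Measurable fun p : (ℕ → ℝ) × (ℕ → E) =>
        lAux Kk (fun θ' l' => ENNReal.ofReal (η t θ' l' ω)) (m - 0) 0 t p.1 p.2 := by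
      have h := (measurable_lAux (f := fun θ' l' => ENNReal.ofReal (η t θ' l' ω)) hsf (hηslice t ω) (m - 0) 0).comp
        (show Measurable fun p : (ℕ → ℝ) × (ℕ → E) =>
          ((t, p.1, p.2) : ℝ × (ℕ → ℝ) × (ℕ → E)) from
          measurable_const.prodMk (measurable_fst.prodMk measurable_snd))
      exact h
    rw [idxMeas_zero (Kk := Kk), lintegral_dirac' _ hLm0] at hfin ⊢
    exact (survAux_eq_toReal hsf t ω (fun θ l => hηpos t θ l ω) (hηslice t ω)
      (m - 0) 0 t _ _ hfin).symm

end
end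

section
/- Let γ > 0, K ≥ 0, c ≥ 0, let α ∈ ℝ^d with ‖α‖ ≤ K, let σ be a real m×d matrix, let Π ⊆ ℝ^m be a set containing 0, and let N : ℝ^m → [0,∞) satisfy N(0) ≤ c. Define, for z ∈ ℝ^d, G(z) := inf_{π ∈ Π} [ (γ/2)‖σᵀπ − (z + α/γ)‖² + N(π) ] − α·z − ‖α‖²/(2γ). Then there exists a constant C > 0, depending only on γ, K and c, such that |G(z₁) − G(z₂)| ≤ C(1 + ‖z₁‖ + ‖z₂‖)‖z₁ − z₂‖ for all z₁, z₂ ∈ ℝ^d. -/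
local notation "⟪" x ", " y "⟫" => @inner ℝ _ _ x y

/-- The minimized driver of the infinite-horizon quadratic BSDEs:
`G(z) = inf_{π ∈ Π} [(γ/2)‖σᵀπ − (z + α/γ)‖² + N(π)] − α·z − ‖α‖²/(2γ)`. -/
noncomputable def driverG (γ : ℝ) {m d : ℕ} (α : EuclideanSpace ℝ (Fin d))
    (σ : Matrix (Fin m) (Fin d) ℝ) (P : Set (EuclideanSpace ℝ (Fin m)))
    (N : EuclideanSpace ℝ (Fin m) → ℝ) (z : EuclideanSpace ℝ (Fin d)) : ℝ :=
  sInf ((fun π => γ / 2 * ‖Matrix.toEuclideanLin σ.transpose π - (z + γ⁻¹ • α)‖ ^ 2 + N π) '' P)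
    - ⟪α, z⟫ - ‖α‖ ^ 2 / (2 * γ)

/-!
Up to the linear term `-α·z`, `G` is the Moreau envelope `w ↦ inf_π (γ/2)‖σᵀπ - w‖² + N(π)`
evaluated at `w = z + α/γ`. Comparing the costs of one `π` at two points `x, y` gives
`cost x π ≤ cost y π + (γ/2)(2‖σᵀπ - y‖ + ‖x - y‖)‖x - y‖`, which is only useful when
`‖σᵀπ - y‖` is controlled. But the infimum at `y` may be taken over `π` with
`‖σᵀπ - y‖ ≤ ‖y‖ + s`, where `(γ/2)s² = c`: any `π` farther away costs more than `π = 0`.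
-/

theorem sq_norm_sub_le {E : Type*} [SeminormedAddCommGroup E] (u v : E) :
    ‖u - v‖ ^ 2 ≤ ‖u‖ ^ 2 + (2 * ‖u‖ + ‖v‖) * ‖v‖ :=
  calc ‖u - v‖ ^ 2 ≤ (‖u‖ + ‖v‖) ^ 2 := by gcongr; exact norm_sub_le u v
    _ = ‖u‖ ^ 2 + (2 * ‖u‖ + ‖v‖) * ‖v‖ := by ring

section MoreauEnvelope

variable {ι E : Type*} [SeminormedAddCommGroup E]

noncomputable def moreauCost (γ : ℝ) (f : ι → E) (N : ι → ℝ) (w : E) (i : ι) : ℝ :=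
  γ / 2 * ‖f i - w‖ ^ 2 + N i

noncomputable def moreauEnvelope (γ : ℝ) (f : ι → E) (N : ι → ℝ) (P : Set ι) (w : E) : ℝ :=
  sInf (moreauCost γ f N w '' P)

variable {γ s : ℝ} {f : ι → E} {N : ι → ℝ} {P : Set ι} {i₀ : ι}

theorem moreauCost_nonneg (hγ : 0 ≤ γ) (hN : ∀ i, 0 ≤ N i) (w : E) (i : ι) :
    0 ≤ moreauCost γ f N w i := by
  have := hN i
  unfold moreauCost
  positivity

theorem moreauCost_le_add (hγ : 0 ≤ γ) (x y : E) (i : ι) :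
    moreauCost γ f N x i ≤
      moreauCost γ f N y i + γ / 2 * ((2 * ‖f i - y‖ + ‖x - y‖) * ‖x - y‖) := by
  have hsq : ‖f i - x‖ ^ 2 ≤ ‖f i - y‖ ^ 2 + (2 * ‖f i - y‖ + ‖x - y‖) * ‖x - y‖ := by
    rw [← sub_sub_sub_cancel_right (f i) x y]
    exact sq_norm_sub_le _ _
  unfold moreauCost
  nlinarith [mul_le_mul_of_nonneg_left hsq (by positivity : 0 ≤ γ / 2)]

theorem moreauCost_le_of_norm_lt (hγ : 0 ≤ γ) (hN : ∀ i, 0 ≤ N i) (hs : 0 ≤ s)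
    (hf : f i₀ = 0) (hN₀ : N i₀ ≤ γ / 2 * s ^ 2) {w : E} {i : ι}
    (hfar : ‖w‖ + s < ‖f i - w‖) :
    moreauCost γ f N w i₀ ≤ moreauCost γ f N w i := by
  have hsq : ‖w‖ ^ 2 + s ^ 2 ≤ ‖f i - w‖ ^ 2 :=
    calc ‖w‖ ^ 2 + s ^ 2 ≤ (‖w‖ + s) ^ 2 := by nlinarith [norm_nonneg w]
      _ ≤ ‖f i - w‖ ^ 2 := by gcongr
  have := hN i
  simp only [moreauCost, hf, zero_sub, norm_neg]
  nlinarith [mul_le_mul_of_nonneg_left hsq (by positivity : 0 ≤ γ / 2)]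

theorem moreauEnvelope_le_add (hγ : 0 ≤ γ) (hN : ∀ i, 0 ≤ N i) (hs : 0 ≤ s)
    (hi₀ : i₀ ∈ P) (hf : f i₀ = 0) (hN₀ : N i₀ ≤ γ / 2 * s ^ 2) (x y : E) :
    moreauEnvelope γ f N P x ≤
      moreauEnvelope γ f N P y + γ / 2 * ((2 * (‖y‖ + s) + ‖x - y‖) * ‖x - y‖) := by
  have hbdd : BddBelow (moreauCost γ f N x '' P) := by
    refine ⟨0, ?_⟩
    rintro _ ⟨i, -, rfl⟩
    exact moreauCost_nonneg hγ hN x i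
  rw [← sub_le_iff_le_add]
  refine le_csInf ⟨_, i₀, hi₀, rfl⟩ ?_
  rintro _ ⟨i, hi, rfl⟩
  rw [sub_le_iff_le_add]
  obtain ⟨j, hj, hnear, hle⟩ : ∃ j ∈ P,
      ‖f j - y‖ ≤ ‖y‖ + s ∧ moreauCost γ f N y j ≤ moreauCost γ f N y i := by
    by_cases h : ‖f i - y‖ ≤ ‖y‖ + s
    · exact ⟨i, hi, h, le_rfl⟩
    · refine ⟨i₀, hi₀, by simp [hf, hs], ?_⟩
      exact moreauCost_le_of_norm_lt hγ hN hs hf hN₀ (not_le.mp h)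
  calc moreauEnvelope γ f N P x ≤ moreauCost γ f N x j := csInf_le hbdd ⟨j, hj, rfl⟩
    _ ≤ moreauCost γ f N y j + γ / 2 * ((2 * ‖f j - y‖ + ‖x - y‖) * ‖x - y‖) :=
      moreauCost_le_add hγ x y j
    _ ≤ moreauCost γ f N y i + γ / 2 * ((2 * (‖y‖ + s) + ‖x - y‖) * ‖x - y‖) := by
      gcongr

theorem abs_moreauEnvelope_sub_le (hγ : 0 ≤ γ) (hN : ∀ i, 0 ≤ N i) (hs : 0 ≤ s)
    (hi₀ : i₀ ∈ P) (hf : f i₀ = 0) (hN₀ : N i₀ ≤ γ / 2 * s ^ 2) (x y : E) :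
    |moreauEnvelope γ f N P x - moreauEnvelope γ f N P y| ≤
      γ / 2 * ((3 + 2 * s) * (1 + ‖x‖ + ‖y‖) * ‖x - y‖) := by
  have hweight : ∀ u v : E,
      (2 * (‖v‖ + s) + ‖u - v‖) * ‖u - v‖ ≤ (3 + 2 * s) * (1 + ‖u‖ + ‖v‖) * ‖u - v‖ := by
    intro u v
    have := norm_sub_le u v
    gcongr
    nlinarith [norm_nonneg u, norm_nonneg v]
  have h₁ := moreauEnvelope_le_add hγ hN hs hi₀ hf hN₀ x y
  have h₂ := moreauEnvelope_le_add hγ hN hs hi₀ hf hN₀ y x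
  have hw₁ := mul_le_mul_of_nonneg_left (hweight x y) (by positivity : 0 ≤ γ / 2)
  have hw₂ := mul_le_mul_of_nonneg_left (hweight y x) (by positivity : 0 ≤ γ / 2)
  rw [norm_sub_rev y x] at h₂ hw₂
  rw [add_right_comm 1 ‖y‖ ‖x‖] at hw₂
  rw [abs_sub_le_iff]
  constructor <;> linarith

end MoreauEnvelope

theorem driverG_eq_moreauEnvelope (γ : ℝ) {m d : ℕ} (α : EuclideanSpace ℝ (Fin d))
    (σ : Matrix (Fin m) (Fin d) ℝ) (P : Set (EuclideanSpace ℝ (Fin m)))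
    (N : EuclideanSpace ℝ (Fin m) → ℝ) (z : EuclideanSpace ℝ (Fin d)) :
    driverG γ α σ P N z =
      moreauEnvelope γ (Matrix.toEuclideanLin σ.transpose) N P (z + γ⁻¹ • α)
        - ⟪α, z⟫ - ‖α‖ ^ 2 / (2 * γ) :=
  rfl

/-- **Local Lipschitz estimate in `z` for the minimized driver**: there is a constant
`C > 0`, depending only on `γ`, `K` and `c`, such that for any data with `0 ∈ Π`,
`N ≥ 0`, `N(0) ≤ c` and `‖α‖ ≤ K`, one has
`|G(z₁) − G(z₂)| ≤ C (1 + ‖z₁‖ + ‖z₂‖) ‖z₁ − z₂‖`. -/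
theorem driver_lipschitz (γ K c : ℝ) (hγ : 0 < γ) (hK : 0 ≤ K) (hc : 0 ≤ c) :
    ∃ C : ℝ, 0 < C ∧
      ∀ (m d : ℕ) (α : EuclideanSpace ℝ (Fin d)) (σ : Matrix (Fin m) (Fin d) ℝ)
        (P : Set (EuclideanSpace ℝ (Fin m))) (N : EuclideanSpace ℝ (Fin m) → ℝ),
        (0 : EuclideanSpace ℝ (Fin m)) ∈ P → (∀ π, 0 ≤ N π) → N 0 ≤ c → ‖α‖ ≤ K →
        ∀ z₁ z₂ : EuclideanSpace ℝ (Fin d),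
          |driverG γ α σ P N z₁ - driverG γ α σ P N z₂| ≤
            C * (1 + ‖z₁‖ + ‖z₂‖) * ‖z₁ - z₂‖ := by
  set s := √(2 * c / γ)
  have hcs : c = γ / 2 * s ^ 2 := by
    rw [Real.sq_sqrt (by positivity)]
    field_simp
  refine ⟨γ / 2 * (3 + 2 * s) * (1 + 2 * (K / γ)) + K, by positivity, ?_⟩
  intro m d α σ P N h0P hN hN0 hα z₁ z₂
  have hshift : ∀ z : EuclideanSpace ℝ (Fin d), ‖z + γ⁻¹ • α‖ ≤ ‖z‖ + K / γ := fun z =>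
    calc ‖z + γ⁻¹ • α‖ ≤ ‖z‖ + γ⁻¹ * ‖α‖ := by
          simpa [norm_smul, abs_of_pos hγ] using norm_add_le z (γ⁻¹ • α)
      _ ≤ ‖z‖ + K / γ := by rw [inv_mul_eq_div]; gcongr
  have henv := abs_moreauEnvelope_sub_le hγ.le hN (Real.sqrt_nonneg _) h0P
    (map_zero (Matrix.toEuclideanLin σ.transpose)) (hcs ▸ hN0) (z₁ + γ⁻¹ • α) (z₂ + γ⁻¹ • α)
  rw [add_sub_add_right_eq_sub] at henv
  have hlin : |⟪α, z₁⟫ - ⟪α, z₂⟫| ≤ K * ‖z₁ - z₂‖ := by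
    rw [← inner_sub_right]
    exact (abs_real_inner_le_norm _ _).trans (by gcongr)
  have hweight : 1 + ‖z₁ + γ⁻¹ • α‖ + ‖z₂ + γ⁻¹ • α‖ ≤ (1 + 2 * (K / γ)) * (1 + ‖z₁‖ + ‖z₂‖) := by
    nlinarith [hshift z₁, hshift z₂, norm_nonneg z₁, norm_nonneg z₂,
      div_nonneg hK hγ.le]
  have hZ : 1 ≤ 1 + ‖z₁‖ + ‖z₂‖ := by linarith [norm_nonneg z₁, norm_nonneg z₂]
  rw [driverG_eq_moreauEnvelope, driverG_eq_moreauEnvelope]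
  set V := moreauEnvelope γ (Matrix.toEuclideanLin σ.transpose) N P
  calc _ = |(V (z₁ + γ⁻¹ • α) - V (z₂ + γ⁻¹ • α)) - (⟪α, z₁⟫ - ⟪α, z₂⟫)| := by
        congr 1; ring
    _ ≤ |V (z₁ + γ⁻¹ • α) - V (z₂ + γ⁻¹ • α)| + |⟪α, z₁⟫ - ⟪α, z₂⟫| := abs_sub _ _
    _ ≤ γ / 2 * ((3 + 2 * s) * ((1 + 2 * (K / γ)) * (1 + ‖z₁‖ + ‖z₂‖)) * ‖z₁ - z₂‖)
        + K * ((1 + ‖z₁‖ + ‖z₂‖) * ‖z₁ - z₂‖) := by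
      gcongr
      · exact henv.trans (by gcongr)
      · exact hlin.trans (by gcongr; exact le_mul_of_one_le_left (norm_nonneg _) hZ)
    _ = _ := by ring
end

section
/- Let γ > 0 and d, m ∈ ℕ. Let α₁, α₂ ∈ ℝ^d, let σ₁, σ₂ be real m×d matrices, let Π₁, Π₂ ⊆ ℝ^m with Π₂ nonempty, and let K₁, K₂ ≥ 0 and z₁, z₂ ∈ ℝ^d with ‖z₁‖ ≤ K₁ and ‖z₂‖ ≤ K₂. Assume: (i) there exists π̂ ∈ Π₁ with σ₁ᵀπ̂ = α₁/γ; (ii) the risk-premium monotonicity condition ‖α₁‖²/(2γ) ≥ ‖α₂‖²/(2γ) + γK₁²/2 + ‖α₁ − α₂‖·K₁ + (K₁ + K₂)‖α₂‖. Then inf_{π ∈ Π₁} [ (γ/2)‖σ₁ᵀπ − (z₁ + α₁/γ)‖² − α₁·z₁ − ‖α₁‖²/(2γ) ] ≤ inf_{π ∈ Π₂} [ (γ/2)‖σ₂ᵀπ − (z₂ + α₂/γ)‖² − α₂·z₂ − ‖α₂‖²/(2γ) ]. -/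
/-!
At the Merton strategy `π̂` the first driver equals `γ/2 ‖z₁‖² - ⟪α₁, z₁⟫ - ‖α₁‖²/(2γ)`, while every
value of the second driver is at least `-⟪α₂, z₂⟫ - ‖α₂‖²/(2γ)`, the quadratic term being nonnegative.
Cauchy–Schwarz with `‖z₁‖ ≤ K₁`, `‖z₂‖ ≤ K₂`, applied to `⟪α₁, z₁⟫ = ⟪α₁ - α₂, z₁⟫ + ⟪α₂, z₁⟫` and to
`⟪α₂, z₂⟫`, shows that the monotonicity condition puts the first number below the second.
-/

local notation "⟪" x ", " y "⟫" => @inner ℝ _ _ x y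

section

variable {E F : Type*} [NormedAddCommGroup E] [InnerProductSpace ℝ E]

/-- `A π` plays the role of `σᵀπ`. -/
noncomputable def quadraticDriver (γ : ℝ) (A : F → E) (α z : E) (π : F) : ℝ :=
  γ / 2 * ‖A π - (z + γ⁻¹ • α)‖ ^ 2 - ⟪α, z⟫ - ‖α‖ ^ 2 / (2 * γ)

theorem le_quadraticDriver {γ : ℝ} (hγ : 0 ≤ γ) (A : F → E) (α z : E) (π : F) :
    -⟪α, z⟫ - ‖α‖ ^ 2 / (2 * γ) ≤ quadraticDriver γ A α z π := by
  have : 0 ≤ γ / 2 * ‖A π - (z + γ⁻¹ • α)‖ ^ 2 := by positivity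
  unfold quadraticDriver
  linarith

theorem quadraticDriver_of_eq_merton (γ : ℝ) {A : F → E} (α z : E) {π : F}
    (hπ : A π = γ⁻¹ • α) :
    quadraticDriver γ A α z π = γ / 2 * ‖z‖ ^ 2 - ⟪α, z⟫ - ‖α‖ ^ 2 / (2 * γ) := by
  rw [quadraticDriver, hπ, show γ⁻¹ • α - (z + γ⁻¹ • α) = -z by abel, norm_neg]

theorem bddBelow_image_quadraticDriver {γ : ℝ} (hγ : 0 ≤ γ) (A : F → E) (α z : E) (P : Set F) :
    BddBelow (quadraticDriver γ A α z '' P) := by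
  refine ⟨-⟪α, z⟫ - ‖α‖ ^ 2 / (2 * γ), ?_⟩
  rintro _ ⟨π, -, rfl⟩
  exact le_quadraticDriver hγ A α z π

theorem merton_value_le_of_risk_premium_mono {γ K₁ K₂ : ℝ} (hγ : 0 ≤ γ) {α₁ α₂ z₁ z₂ : E}
    (hz₁ : ‖z₁‖ ≤ K₁) (hz₂ : ‖z₂‖ ≤ K₂)
    (hmono : ‖α₂‖ ^ 2 / (2 * γ) + γ * K₁ ^ 2 / 2 + ‖α₁ - α₂‖ * K₁ + (K₁ + K₂) * ‖α₂‖ ≤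
      ‖α₁‖ ^ 2 / (2 * γ)) :
    γ / 2 * ‖z₁‖ ^ 2 - ⟪α₁, z₁⟫ - ‖α₁‖ ^ 2 / (2 * γ) ≤ -⟪α₂, z₂⟫ - ‖α₂‖ ^ 2 / (2 * γ) := by
  have hsq : γ / 2 * ‖z₁‖ ^ 2 ≤ γ * K₁ ^ 2 / 2 := by
    have := pow_le_pow_left₀ (norm_nonneg z₁) hz₁ 2
    nlinarith
  have hdiff : ⟪α₂ - α₁, z₁⟫ ≤ ‖α₁ - α₂‖ * K₁ := by
    calc ⟪α₂ - α₁, z₁⟫ ≤ ‖α₂ - α₁‖ * ‖z₁‖ := real_inner_le_norm _ _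
      _ ≤ ‖α₁ - α₂‖ * K₁ := by rw [norm_sub_rev]; gcongr
  have hα₂z₁ : ⟪-α₂, z₁⟫ ≤ ‖α₂‖ * K₁ := by
    calc ⟪-α₂, z₁⟫ ≤ ‖-α₂‖ * ‖z₁‖ := real_inner_le_norm _ _
      _ ≤ ‖α₂‖ * K₁ := by rw [norm_neg]; gcongr
  have hα₂z₂ : ⟪α₂, z₂⟫ ≤ ‖α₂‖ * K₂ := by
    calc ⟪α₂, z₂⟫ ≤ ‖α₂‖ * ‖z₂‖ := real_inner_le_norm _ _
      _ ≤ ‖α₂‖ * K₂ := by gcongr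
  rw [inner_sub_left] at hdiff
  rw [inner_neg_left] at hα₂z₁
  linarith

end

theorem minimized_driver_comparison_general (γ : ℝ) (hγ : 0 < γ) (d m : ℕ)
    (α₁ α₂ : EuclideanSpace ℝ (Fin d))
    (σ₁ σ₂ : Matrix (Fin m) (Fin d) ℝ)
    (P₁ P₂ : Set (EuclideanSpace ℝ (Fin m))) (hP₂ : P₂.Nonempty)
    (K₁ K₂ : ℝ)
    (z₁ z₂ : EuclideanSpace ℝ (Fin d)) (hz₁ : ‖z₁‖ ≤ K₁) (hz₂ : ‖z₂‖ ≤ K₂)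
    (hmerton : ∃ π ∈ P₁, Matrix.toEuclideanLin σ₁.transpose π = γ⁻¹ • α₁)
    (hmono : ‖α₂‖ ^ 2 / (2 * γ) + γ * K₁ ^ 2 / 2 + ‖α₁ - α₂‖ * K₁ + (K₁ + K₂) * ‖α₂‖ ≤
      ‖α₁‖ ^ 2 / (2 * γ)) :
    sInf ((fun π => γ / 2 * ‖Matrix.toEuclideanLin σ₁.transpose π - (z₁ + γ⁻¹ • α₁)‖ ^ 2
        - ⟪α₁, z₁⟫ - ‖α₁‖ ^ 2 / (2 * γ)) '' P₁) ≤
      sInf ((fun π => γ / 2 * ‖Matrix.toEuclideanLin σ₂.transpose π - (z₂ + γ⁻¹ • α₂)‖ ^ 2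
        - ⟪α₂, z₂⟫ - ‖α₂‖ ^ 2 / (2 * γ)) '' P₂) := by
  change sInf (quadraticDriver γ (Matrix.toEuclideanLin σ₁.transpose) α₁ z₁ '' P₁) ≤
    sInf (quadraticDriver γ (Matrix.toEuclideanLin σ₂.transpose) α₂ z₂ '' P₂)
  obtain ⟨π₀, hπ₀, hmerton⟩ := hmerton
  calc _ ≤ quadraticDriver γ (Matrix.toEuclideanLin σ₁.transpose) α₁ z₁ π₀ :=
        csInf_le (bddBelow_image_quadraticDriver hγ.le _ _ _ _) ⟨π₀, hπ₀, rfl⟩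
    _ = γ / 2 * ‖z₁‖ ^ 2 - ⟪α₁, z₁⟫ - ‖α₁‖ ^ 2 / (2 * γ) :=
        quadraticDriver_of_eq_merton γ α₁ z₁ hmerton
    _ ≤ -⟪α₂, z₂⟫ - ‖α₂‖ ^ 2 / (2 * γ) := merton_value_le_of_risk_premium_mono hγ.le hz₁ hz₂ hmono
    _ ≤ _ := le_csInf (hP₂.image _) <| by
        rintro _ ⟨π, -, rfl⟩
        exact le_quadraticDriver hγ.le _ α₂ z₂ π

/-- **Comparison of minimized quadratic drivers across consecutive default intervals**:
under the Merton-strategy condition `σ₁ᵀπ̂ = α₁/γ` for some `π̂ ∈ Π₁` and the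
risk-premium monotonicity condition
`‖α₁‖²/(2γ) ≥ ‖α₂‖²/(2γ) + γK₁²/2 + ‖α₁ − α₂‖K₁ + (K₁ + K₂)‖α₂‖`,
one has
`inf_{π∈Π₁} [(γ/2)‖σ₁ᵀπ − (z₁ + α₁/γ)‖² − α₁·z₁ − ‖α₁‖²/(2γ)]
  ≤ inf_{π∈Π₂} [(γ/2)‖σ₂ᵀπ − (z₂ + α₂/γ)‖² − α₂·z₂ − ‖α₂‖²/(2γ)]`. -/
theorem minimized_driver_comparison (γ : ℝ) (hγ : 0 < γ) (d m : ℕ)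
    (α₁ α₂ : EuclideanSpace ℝ (Fin d))
    (σ₁ σ₂ : Matrix (Fin m) (Fin d) ℝ)
    (P₁ P₂ : Set (EuclideanSpace ℝ (Fin m))) (hP₂ : P₂.Nonempty)
    (K₁ K₂ : ℝ) (hK₁ : 0 ≤ K₁) (hK₂ : 0 ≤ K₂)
    (z₁ z₂ : EuclideanSpace ℝ (Fin d)) (hz₁ : ‖z₁‖ ≤ K₁) (hz₂ : ‖z₂‖ ≤ K₂)
    (hmerton : ∃ π ∈ P₁, Matrix.toEuclideanLin σ₁.transpose π = γ⁻¹ • α₁)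
    (hmono : ‖α₂‖ ^ 2 / (2 * γ) + γ * K₁ ^ 2 / 2 + ‖α₁ - α₂‖ * K₁ + (K₁ + K₂) * ‖α₂‖ ≤
      ‖α₁‖ ^ 2 / (2 * γ)) :
    sInf ((fun π => γ / 2 * ‖Matrix.toEuclideanLin σ₁.transpose π - (z₁ + γ⁻¹ • α₁)‖ ^ 2
        - ⟪α₁, z₁⟫ - ‖α₁‖ ^ 2 / (2 * γ)) '' P₁) ≤
      sInf ((fun π => γ / 2 * ‖Matrix.toEuclideanLin σ₂.transpose π - (z₂ + γ⁻¹ • α₂)‖ ^ 2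
        - ⟪α₂, z₂⟫ - ‖α₂‖ ^ 2 / (2 * γ)) '' P₂) :=
  minimized_driver_comparison_general γ hγ d m α₁ α₂ σ₁ σ₂ P₁ P₂ hP₂ K₁ K₂ z₁ z₂ hz₁ hz₂ hmerton
    hmono
end
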